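/- arXiv:1409.0031 — 7 statements merged into one kernel-verified Lean document; each statement's English description precedes it below -/
import Mathlib

section
/- For every real α with 0 < α < 1 and every real δ > 0, the expression (α^δ − α^{2δ} + δ·α^δ·log α)/(1 − α^δ)², which is the derivative with respect to δ of the function g(δ) = δ·α^δ/(1 − α^δ), satisfies −1/2 ≤ (α^δ − α^{2δ} + δ·α^δ·log α)/(1 − α^δ)² ≤ 0. In particular, g is nonincreasing on (0, ∞). -/
/-! With `x = α^δ ∈ (0, 1)` the derivative equals `(x - x² + x log x)/(1 - x)²`. The upper bound
is `log x ≤ x - 1`; the lower bound is equivalent to `x log x ≥ (x² - 1)/2`, i.e. to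
`sinh (log x) ≤ log x` for `log x ≤ 0`. -/

open Real

lemma sub_inv_div_two_le_log {x : ℝ} (hx : 0 < x) (hx1 : x ≤ 1) : (x - x⁻¹) / 2 ≤ log x := by
  rw [← sinh_log hx]
  exact sinh_le_self_iff.2 (log_nonpos hx.le hx1)

lemma sub_sq_add_mul_log_div_one_sub_sq_nonpos {x : ℝ} (hx : 0 < x) :
    (x - x ^ 2 + x * log x) / (1 - x) ^ 2 ≤ 0 := by
  have hlog := log_le_sub_one_of_pos hx
  exact div_nonpos_of_nonpos_of_nonneg (by nlinarith) (sq_nonneg _)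

lemma neg_half_le_sub_sq_add_mul_log_div_one_sub_sq {x : ℝ} (hx : 0 < x) (hx1 : x ≤ 1) :
    -(1 / 2) ≤ (x - x ^ 2 + x * log x) / (1 - x) ^ 2 := by
  rcases hx1.lt_or_eq with hx1 | rfl
  · have hlog : (x ^ 2 - 1) / 2 ≤ x * log x := by
      calc (x ^ 2 - 1) / 2 = x * ((x - x⁻¹) / 2) := by field_simp
        _ ≤ x * log x := mul_le_mul_of_nonneg_left (sub_inv_div_two_le_log hx hx1.le) hx.le
    rw [le_div_iff₀ (by nlinarith)]
    nlinarith
  · norm_num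

lemma rpow_sub_rpow_two_mul_add_mul_rpow_mul_log {a : ℝ} (ha : 0 < a) (s : ℝ) :
    a ^ s - a ^ (2 * s) + s * a ^ s * log a = a ^ s - (a ^ s) ^ 2 + a ^ s * log (a ^ s) := by
  rw [two_mul, rpow_add ha, log_rpow ha]
  ring

lemma hasDerivAt_mul_rpow_div_one_sub_rpow {a s : ℝ} (ha : 0 < a) (hs : a ^ s ≠ 1) :
    HasDerivAt (fun t : ℝ => t * a ^ t / (1 - a ^ t))
      ((a ^ s - a ^ (2 * s) + s * a ^ s * log a) / (1 - a ^ s) ^ 2) s := by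
  have hpow : HasDerivAt (fun t : ℝ => a ^ t) (a ^ s * log a) s :=
    (hasStrictDerivAt_const_rpow ha s).hasDerivAt
  have hs' : 1 - a ^ s ≠ 0 := sub_ne_zero.2 hs.symm
  refine (((hasDerivAt_id s).mul hpow).div (hpow.const_sub 1) hs').congr_deriv ?_
  simp only [Pi.mul_apply, id_eq]
  rw [two_mul, rpow_add ha]
  field_simp
  ring

/-- For `0 < α < 1` and `δ > 0`, the expression
`(α^δ - α^(2δ) + δ·α^δ·log α)/(1 - α^δ)²` is the derivative at `δ` of
`g(δ) = δ·α^δ/(1 - α^δ)`, lies in `[-1/2, 0]`, and `g` is nonincreasing on `(0, ∞)`. -/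
theorem stmt_3 (α δ : ℝ) (hα0 : 0 < α) (hα1 : α < 1) (hδ : 0 < δ) :
    HasDerivAt (fun s : ℝ => s * α ^ s / (1 - α ^ s))
      ((α ^ δ - α ^ (2 * δ) + δ * α ^ δ * Real.log α) / (1 - α ^ δ) ^ 2) δ ∧
    (-(1 / 2) ≤ (α ^ δ - α ^ (2 * δ) + δ * α ^ δ * Real.log α) / (1 - α ^ δ) ^ 2 ∧
      (α ^ δ - α ^ (2 * δ) + δ * α ^ δ * Real.log α) / (1 - α ^ δ) ^ 2 ≤ 0) ∧
    AntitoneOn (fun s : ℝ => s * α ^ s / (1 - α ^ s)) (Set.Ioi 0) := by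
  have hderiv : ∀ s > 0, HasDerivAt (fun s : ℝ => s * α ^ s / (1 - α ^ s))
      ((α ^ s - α ^ (2 * s) + s * α ^ s * log α) / (1 - α ^ s) ^ 2) s := fun s hs =>
    hasDerivAt_mul_rpow_div_one_sub_rpow hα0 (rpow_lt_one hα0.le hα1 hs).ne
  have hbounds : ∀ s > 0,
      -(1 / 2) ≤ (α ^ s - α ^ (2 * s) + s * α ^ s * log α) / (1 - α ^ s) ^ 2 ∧
      (α ^ s - α ^ (2 * s) + s * α ^ s * log α) / (1 - α ^ s) ^ 2 ≤ 0 := fun s hs => by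
    have hx := rpow_pos_of_pos hα0 s
    rw [rpow_sub_rpow_two_mul_add_mul_rpow_mul_log hα0]
    exact ⟨neg_half_le_sub_sq_add_mul_log_div_one_sub_sq hx (rpow_le_one hα0.le hα1.le hs.le),
      sub_sq_add_mul_log_div_one_sub_sq_nonpos hx⟩
  refine ⟨hderiv δ hδ, hbounds δ hδ, ?_⟩
  refine antitoneOn_of_hasDerivWithinAt_nonpos (convex_Ioi 0)
    (f' := fun s => (α ^ s - α ^ (2 * s) + s * α ^ s * log α) / (1 - α ^ s) ^ 2)
    (fun s hs => (hderiv s hs).continuousAt.continuousWithinAt) ?_ ?_ <;> rw [interior_Ioi]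
  · exact fun s hs => (hderiv s hs).hasDerivWithinAt
  · exact fun s hs => (hbounds s hs).2
end

section
/- Let 0 < λmin ≤ λmax and p ≥ 1. Let A be a p × p diagonal matrix with all diagonal entries in [0, 1] and let b ∈ ℝ^p have all entries nonnegative, and define Φ(λ) = Aλ + b. Then for all λ₁, λ₂ ∈ [λmin, λmax]^p one has D*(Φ(λ₁) ‖ Φ(λ₂)) ≤ D*(λ₁ ‖ λ₂); that is, Φ is contractive with respect to the Bregman divergence induced by λ ↦ ⟨λ, log λ⟩ − ⟨1, λ⟩. -/
/-!
Writing `kl u v = v · klFun (u / v)`, convexity of `klFun` makes `kl` jointly subadditive, and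
`kl` is positively homogeneous. Hence, coordinatewise,
`kl (a u + c) (a v + c) ≤ kl (a u) (a v) + kl c c = a · kl u v ≤ kl u v` for `a ∈ [0, 1]`, `c ≥ 0`.
-/

/-- Scalar Bregman divergence `kl(u‖v) = u·log(u/v) − u + v` induced by `u ↦ u log u − u`.
With Lean's conventions (`log 0 = 0`, `0 * x = 0`) this also encodes `kl(0‖0) = 0`. -/
noncomputable def kl (u v : ℝ) : ℝ := u * Real.log (u / v) - u + v

open InformationTheory

lemma kl_eq_mul_klFun (u : ℝ) {v : ℝ} (hv : 0 < v) : kl u v = v * klFun (u / v) := by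
  rw [kl, klFun_apply]
  field_simp
  ring

lemma kl_nonneg {u v : ℝ} (hu : 0 ≤ u) (hv : 0 < v) : 0 ≤ kl u v := by
  rw [kl_eq_mul_klFun u hv]
  exact mul_nonneg hv.le (klFun_nonneg (div_nonneg hu hv.le))

lemma kl_self (c : ℝ) : kl c c = 0 := by
  rcases eq_or_ne c 0 with rfl | hc
  · simp [kl]
  · simp [kl, div_self hc]

lemma kl_mul_mul (a u v : ℝ) : kl (a * u) (a * v) = a * kl u v := by
  rcases eq_or_ne a 0 with rfl | ha
  · simp [kl]
  · rw [kl, kl, mul_div_mul_left u v ha]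
    ring

lemma kl_add_add_le {x₁ x₂ y₁ y₂ : ℝ} (hx₁ : 0 ≤ x₁) (hx₂ : 0 ≤ x₂) (hy₁ : 0 < y₁)
    (hy₂ : 0 < y₂) : kl (x₁ + x₂) (y₁ + y₂) ≤ kl x₁ y₁ + kl x₂ y₂ := by
  have hy : 0 < y₁ + y₂ := add_pos hy₁ hy₂
  -- `(x₁ + x₂) / (y₁ + y₂)` is the `yᵢ`-weighted mean of the ratios `xᵢ / yᵢ`.
  have hconv := convexOn_klFun.2 (Set.mem_Ici.2 (div_nonneg hx₁ hy₁.le))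
    (Set.mem_Ici.2 (div_nonneg hx₂ hy₂.le)) (div_nonneg hy₁.le hy.le) (div_nonneg hy₂.le hy.le)
    (by field_simp)
  have hmean : y₁ / (y₁ + y₂) * (x₁ / y₁) + y₂ / (y₁ + y₂) * (x₂ / y₂) =
      (x₁ + x₂) / (y₁ + y₂) := by
    field_simp
  simp only [smul_eq_mul, hmean] at hconv
  rw [kl_eq_mul_klFun _ hy, kl_eq_mul_klFun _ hy₁, kl_eq_mul_klFun _ hy₂]
  calc (y₁ + y₂) * klFun ((x₁ + x₂) / (y₁ + y₂))
      ≤ (y₁ + y₂) * (y₁ / (y₁ + y₂) * klFun (x₁ / y₁) + y₂ / (y₁ + y₂) * klFun (x₂ / y₂)) :=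
        mul_le_mul_of_nonneg_left hconv hy.le
    _ = y₁ * klFun (x₁ / y₁) + y₂ * klFun (x₂ / y₂) := by
        field_simp

lemma kl_add_const_le {x y c : ℝ} (hx : 0 ≤ x) (hy : 0 < y) (hc : 0 ≤ c) :
    kl (x + c) (y + c) ≤ kl x y := by
  rcases hc.eq_or_lt with rfl | hc
  · simp
  · simpa [kl_self] using kl_add_add_le hx hc.le hy hc

lemma kl_mul_add_le {a c u v : ℝ} (ha₀ : 0 ≤ a) (ha₁ : a ≤ 1) (hc : 0 ≤ c) (hu : 0 ≤ u)
    (hv : 0 < v) : kl (a * u + c) (a * v + c) ≤ kl u v := by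
  rcases ha₀.eq_or_lt with rfl | ha
  · simpa [kl_self] using kl_nonneg hu hv
  calc kl (a * u + c) (a * v + c) ≤ kl (a * u) (a * v) :=
        kl_add_const_le (mul_nonneg ha₀ hu) (mul_pos ha hv) hc
    _ = a * kl u v := kl_mul_mul a u v
    _ ≤ kl u v := mul_le_of_le_one_left (kl_nonneg hu hv) ha₁

theorem stmt_5_general (p : ℕ) (lammin lammax : ℝ)
    (hmin : 0 < lammin)
    (A b : Fin p → ℝ)
    (hA : ∀ k, A k ∈ Set.Icc (0 : ℝ) 1) (hb : ∀ k, 0 ≤ b k)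
    (lam₁ lam₂ : Fin p → ℝ)
    (h₁ : ∀ k, lam₁ k ∈ Set.Icc lammin lammax)
    (h₂ : ∀ k, lam₂ k ∈ Set.Icc lammin lammax) :
    ∑ k, kl (A k * lam₁ k + b k) (A k * lam₂ k + b k) ≤ ∑ k, kl (lam₁ k) (lam₂ k) :=
  Finset.sum_le_sum fun k _ ↦ kl_mul_add_le (hA k).1 (hA k).2 (hb k)
    (hmin.le.trans (h₁ k).1) (hmin.trans_le (h₂ k).1)

/-- Lemma 2 of the paper: the dynamical model `Φ(λ) = Aλ + b`, with `A` diagonal with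
entries in `[0,1]` and `b ⪰ 0`, is contractive with respect to the Bregman divergence
`D*(a‖b) = Σ_k (a_k log(a_k/b_k) − a_k + b_k)` induced by `λ ↦ ⟨λ, log λ⟩ − ⟨1, λ⟩`,
on the box `[λmin, λmax]^p`. -/
theorem stmt_5 (p : ℕ) (hp : 1 ≤ p) (lammin lammax : ℝ)
    (hmin : 0 < lammin) (hle : lammin ≤ lammax)
    (A b : Fin p → ℝ)
    (hA : ∀ k, A k ∈ Set.Icc (0 : ℝ) 1) (hb : ∀ k, 0 ≤ b k)
    (lam₁ lam₂ : Fin p → ℝ)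
    (h₁ : ∀ k, lam₁ k ∈ Set.Icc lammin lammax)
    (h₂ : ∀ k, lam₂ k ∈ Set.Icc lammin lammax) :
    ∑ k, kl (A k * lam₁ k + b k) (A k * lam₂ k + b k) ≤ ∑ k, kl (lam₁ k) (lam₂ k) :=
  stmt_5_general p lammin lammax hmin A b hA hb lam₁ lam₂ h₁ h₂
end

section
/- Fix reals u, v > 0 and a > 0. Then the function b ↦ kl(a·u + b ‖ a·v + b) is nonincreasing on [0, ∞); that is, for all 0 ≤ b₁ ≤ b₂ one has kl(a·u + b₂ ‖ a·v + b₂) ≤ kl(a·u + b₁ ‖ a·v + b₁). -/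
open Real Set

lemma hasDerivAt_kl_add {x y b : ℝ} (hx : 0 < x + b) (hy : 0 < y + b) :
    HasDerivAt (fun t => kl (x + t) (y + t))
      (log ((x + b) / (y + b)) + 1 - (x + b) / (y + b)) b := by
  have hX : HasDerivAt (fun t => x + t) 1 b := (hasDerivAt_id b).const_add x
  have hY : HasDerivAt (fun t => y + t) 1 b := (hasDerivAt_id b).const_add y
  have hlog := (hX.div hY hy.ne').log (div_pos hx hy).ne'
  refine (((hX.mul hlog).sub hX).add hY).congr_deriv ?_
  simp only [Pi.div_apply]
  field_simp
  ring

lemma antitoneOn_kl_add (x y : ℝ) :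
    AntitoneOn (fun b => kl (x + b) (y + b)) (Ioi (max (-x) (-y))) := by
  have hpos : ∀ b ∈ Ioi (max (-x) (-y)), 0 < x + b ∧ 0 < y + b := fun b hb => by
    rw [mem_Ioi, max_lt_iff] at hb
    constructor <;> linarith
  have hderiv : ∀ b ∈ Ioi (max (-x) (-y)), HasDerivAt (fun t => kl (x + t) (y + t))
      (log ((x + b) / (y + b)) + 1 - (x + b) / (y + b)) b := fun b hb =>
    hasDerivAt_kl_add (hpos b hb).1 (hpos b hb).2
  refine antitoneOn_of_hasDerivWithinAt_nonpos (convex_Ioi _)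
    (fun b hb => (hderiv b hb).continuousAt.continuousWithinAt)
    (fun b hb => (hderiv b (interior_subset hb)).hasDerivWithinAt) fun b hb => ?_
  obtain ⟨hx, hy⟩ := hpos b (interior_subset hb)
  have hlog_le := log_le_sub_one_of_pos (div_pos hx hy)
  linarith

/-- For fixed `u, v > 0` and `a > 0`, the function `b ↦ kl(a·u + b ‖ a·v + b)`
is nonincreasing on `[0, ∞)`. -/
theorem stmt_7 (u v a : ℝ) (hu : 0 < u) (hv : 0 < v) (ha : 0 < a)
    (b₁ b₂ : ℝ) (hb₁ : 0 ≤ b₁) (hb : b₁ ≤ b₂) :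
    kl (a * u + b₂) (a * v + b₂) ≤ kl (a * u + b₁) (a * v + b₁) := by
  have hneg : max (-(a * u)) (-(a * v)) < 0 :=
    max_lt (neg_neg_of_pos (mul_pos ha hu)) (neg_neg_of_pos (mul_pos ha hv))
  exact antitoneOn_kl_add (a * u) (a * v) (hneg.trans_le hb₁) (hneg.trans_le (hb₁.trans hb)) hb
end

section
/- Fix p ≥ 1, δ > 0, α ∈ (0, 1), a delay D ≥ δ, a matrix W ∈ ℝ₊^{p×p}, and a baseline μ̄ ∈ ℝ^p. Let (k_n, τ_n), n = 1, …, N, be a finite list of events with k_n ∈ {1, …, p} and τ_n > 0. Define for each integer t ≥ 1 the vector λ_t ∈ ℝ^p by λ_{t,k} = μ̄_k + Σ_{n : τ_n < δt − D} W_{k,k_n}·α^{δt − τ_n − D}, and define y'_t = Σ_{n : δt − D ≤ τ_n < δ(t+1) − D} e_{k_n}·α^{δ(t+1) − τ_n − D}, where e_j ∈ ℝ^p is the j-th standard basis vector. Then for every t ≥ 1, λ_{t+1} = α^δ·λ_t + W·y'_t + (1 − α^δ)·μ̄. -/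
open scoped Classical

/-- Discrete-time multivariate Hawkes rate with delayed exponential influence
`h(τ) = α^{τ−D}·1_{τ>D}`:
`λ_{t,k} = μ̄_k + Σ_{n : τ_n < δt − D} W_{k,k_n}·α^{δt − τ_n − D}`. -/
noncomputable def delayedHawkesRate (p N : ℕ) (δ α D : ℝ) (W : Matrix (Fin p) (Fin p) ℝ)
    (μbar : Fin p → ℝ) (kn : Fin N → Fin p) (τ : Fin N → ℝ) (t : ℕ) (k : Fin p) : ℝ :=
  μbar k + ∑ n ∈ Finset.univ.filter (fun n => τ n < δ * t - D),
    W k (kn n) * α ^ (δ * t - τ n - D)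

/-- `y'_t = Σ_{n : δt − D ≤ τ_n < δ(t+1) − D} e_{k_n}·α^{δ(t+1) − τ_n − D}`. -/
noncomputable def delayedHawkesY (p N : ℕ) (δ α D : ℝ)
    (kn : Fin N → Fin p) (τ : Fin N → ℝ) (t : ℕ) (j : Fin p) : ℝ :=
  ∑ n ∈ Finset.univ.filter (fun n => δ * t - D ≤ τ n ∧ τ n < δ * (t + 1) - D),
    (if kn n = j then α ^ (δ * (t + 1) - τ n - D) else 0)

/-! Events with `τ_n < δt − D` enter `λ_{t+1}` with their weight in `λ_t` multiplied by `α^δ`,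
since `α^{x+δ} = α^δ·α^x`; the events of the new window `[δt − D, δ(t+1) − D)` contribute
exactly `W·y'_t`. -/

open Matrix

theorem Finset.sum_filter_lt_eq_add_sum_filter_Ico {ι M β : Type*} [AddCommMonoid M] [LinearOrder β]
    (s : Finset ι) (g : ι → β) (f : ι → M) {a b : β} (hab : a ≤ b) :
    ∑ n ∈ s with g n < b, f n =
      ∑ n ∈ s with g n < a, f n + ∑ n ∈ s with a ≤ g n ∧ g n < b, f n := by
  rw [← Finset.sum_filter_add_sum_filter_not (s.filter (g · < b)) (g · < a),
    Finset.filter_filter, Finset.filter_filter]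
  congr 2 <;> ext n <;> simp only [Finset.mem_filter, not_lt]
  · exact and_congr_right fun _ => ⟨fun h => h.2, fun h => ⟨h.trans_le hab, h⟩⟩
  · exact and_congr_right fun _ => And.comm

theorem Matrix.mulVec_sum_ite_eq_apply {m n ι R : Type*} [Fintype n] [DecidableEq n]
    [NonUnitalNonAssocSemiring R] (W : Matrix m n R) (s : Finset ι) (j : ι → n) (c : ι → R)
    (k : m) :
    (W *ᵥ fun i => ∑ x ∈ s, if j x = i then c x else 0) k = ∑ x ∈ s, W k (j x) * c x := by
  simp only [Matrix.mulVec, dotProduct, Finset.mul_sum]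
  rw [Finset.sum_comm]
  simp [mul_ite]

theorem stmt_10_general (p : ℕ) (δ α D : ℝ) (hδ : 0 < δ)
    (hα : α ∈ Set.Ioo (0 : ℝ) 1)
    (W : Matrix (Fin p) (Fin p) ℝ)
    (μbar : Fin p → ℝ)
    (N : ℕ) (kn : Fin N → Fin p) (τ : Fin N → ℝ) :
    ∀ t : ℕ, 1 ≤ t → ∀ k : Fin p,
      delayedHawkesRate p N δ α D W μbar kn τ (t + 1) k =
        α ^ δ * delayedHawkesRate p N δ α D W μbar kn τ t k +
          W.mulVec (delayedHawkesY p N δ α D kn τ t) k + (1 - α ^ δ) * μbar k := by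
  intro t _ k
  have hdecay (n : Fin N) : α ^ (δ * ↑(t + 1) - τ n - D) = α ^ δ * α ^ (δ * t - τ n - D) := by
    rw [← Real.rpow_add hα.1]
    push_cast
    ring_nf
  have hwindow : δ * t - D ≤ δ * ↑(t + 1) - D := by push_cast; linarith
  unfold delayedHawkesRate delayedHawkesY
  rw [Matrix.mulVec_sum_ite_eq_apply, Finset.sum_filter_lt_eq_add_sum_filter_Ico _ _ _ hwindow,
    Finset.sum_congr rfl fun n _ => by rw [hdecay n, mul_left_comm], ← Finset.mul_sum]
  push_cast
  ring

/-- The discrete-time Hawkes rate with delayed exponential influence satisfies the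
linear dynamics `λ_{t+1} = α^δ·λ_t + W·y'_t + (1 − α^δ)·μ̄` for every `t ≥ 1`. -/
theorem stmt_10 (p : ℕ) (hp : 1 ≤ p) (δ α D : ℝ) (hδ : 0 < δ)
    (hα : α ∈ Set.Ioo (0 : ℝ) 1) (hD : δ ≤ D)
    (W : Matrix (Fin p) (Fin p) ℝ) (hW : ∀ i j, 0 ≤ W i j)
    (μbar : Fin p → ℝ)
    (N : ℕ) (kn : Fin N → Fin p) (τ : Fin N → ℝ) (hτ : ∀ n, 0 < τ n) :
    ∀ t : ℕ, 1 ≤ t → ∀ k : Fin p,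
      delayedHawkesRate p N δ α D W μbar kn τ (t + 1) k =
        α ^ δ * delayedHawkesRate p N δ α D W μbar kn τ t k +
          W.mulVec (delayedHawkesY p N δ α D kn τ t) k + (1 - α ^ δ) * μbar k :=
  stmt_10_general p δ α D hδ hα W μbar N kn τ
end

section
/- Fix p ≥ 1, a horizon T > 0, a window size δ > 0 with T/δ a positive integer, α ∈ (0, 1), a matrix W ∈ ℝ₊^{p×p} with all entries satisfying 0 ≤ W_{i,j} ≤ Wmax, and a baseline μ̄ ∈ ℝ^p with μ̄_k ≥ μmin > 0 for all k. Let (k_n, τ_n), n = 1, …, N_T, be the events, with k_n ∈ {1, …, p}, 0 < τ_n ≤ T, and suppose that no actor participates in more than xmax events per unit time (in particular, each actor has at most xmax·δ events in any interval of length δ). Then |L_T(μ) − L_T^{(δ)}(λ)| ≤ (3·p·Wmax/2 + Wmax·xmax·p/μmin − log α)·N_T·δ. -/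
open scoped Classical

/-- Continuous-time multivariate Hawkes rate with exponential influence
`h(τ) = α^τ·1_{τ>0}`: `μ_k(s) = μ̄_k + Σ_{n : τ_n < s} W_{k,k_n}·α^{s − τ_n}`. -/
noncomputable def contRate (p N : ℕ) (α : ℝ) (W : Matrix (Fin p) (Fin p) ℝ)
    (μbar : Fin p → ℝ) (kn : Fin N → Fin p) (τ : Fin N → ℝ) (k : Fin p) (s : ℝ) : ℝ :=
  μbar k + ∑ n ∈ Finset.univ.filter (fun n => τ n < s), W k (kn n) * α ^ (s - τ n)

/-- Discretized rate `λ_{t,k} = μ̄_k + Σ_{n : τ̄_n < δt} W_{k,k_n}·α^{δt − τ_n}`,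
where `τ̄_n = ⌈τ_n/δ⌉·δ`. -/
noncomputable def discRate (p N : ℕ) (δ α : ℝ) (W : Matrix (Fin p) (Fin p) ℝ)
    (μbar : Fin p → ℝ) (kn : Fin N → Fin p) (τ : Fin N → ℝ) (t : ℕ) (k : Fin p) : ℝ :=
  μbar k + ∑ n ∈ Finset.univ.filter (fun n => (⌈τ n / δ⌉ : ℝ) * δ < δ * t),
    W k (kn n) * α ^ (δ * t - τ n)

/-- `x_{t,k}`: number of events of actor `k` in the window `((t−1)δ, tδ]`. -/
noncomputable def eventCount (p N : ℕ) (δ : ℝ)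
    (kn : Fin N → Fin p) (τ : Fin N → ℝ) (t : ℕ) (k : Fin p) : ℕ :=
  (Finset.univ.filter (fun n => kn n = k ∧ ((t : ℝ) - 1) * δ < τ n ∧ τ n ≤ (t : ℝ) * δ)).card

/-!
Let `t_n = ⌈τ_n / δ⌉` be the window of event `n`. Both compensators are linear in the kernel, so
the difference splits into a compensator part `∑_k ∑_n W_{k,k_n} (I_n - S_n)`, where
`I_n = ∫_{τ_n}^T α^(s - τ_n) ds` and `S_n` is its right Riemann sum over the windows after `t_n`,
and a log part `∑_n (log μ_{k_n}(τ_n) - log λ_{t_n,k_n})`; both parts are nonnegative.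
With `α^δ = e^(-x)`, `S_n` is a geometric sum, and `I_n - S_n ≤ 3δ/2`: at most `δ` from the
partial window containing `τ_n`, and `δ/2` from the trapezoid bound
`2 (1 - e^(-x)) ≤ x (1 + e^(-x))`. In the log part, `λ_{t_n,k_n}` differs from `μ_{k_n}(τ_n)`
only by the decay factor `α^(δ t_n - τ_n) ≥ α^δ` and by the events of window `t_n` preceding
`τ_n`; there are at most `p xmax δ` of them, each contributing at most `Wmax`.
-/

open Finset Real MeasureTheory

lemma mul_exp_neg_le_one_sub_exp_neg (x : ℝ) : x * exp (-x) ≤ 1 - exp (-x) := by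
  have h := mul_le_mul_of_nonneg_right (add_one_le_exp x) (exp_pos (-x)).le
  rw [← exp_add, add_neg_cancel, exp_zero] at h
  linarith

lemma two_mul_one_sub_exp_neg_le {x : ℝ} (hx : 0 ≤ x) :
    2 * (1 - exp (-x)) ≤ x * (1 + exp (-x)) := by
  let g : ℝ → ℝ := fun y => y * (1 + exp (-y)) - 2 * (1 - exp (-y))
  have hg : ∀ y, HasDerivAt g (1 - exp (-y) - y * exp (-y)) y := fun y => by
    have he : HasDerivAt (fun y => exp (-y)) (-exp (-y)) y := by
      simpa using (hasDerivAt_neg y).exp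
    exact (((hasDerivAt_id' y).mul (he.const_add 1)).sub
      ((he.const_sub 1).const_mul 2)).congr_deriv (by ring)
  have hmono := monotone_of_hasDerivAt_nonneg hg fun y => show 0 ≤ 1 - exp (-y) - y * exp (-y) by
    linarith [mul_exp_neg_le_one_sub_exp_neg y]
  simpa [g] using hmono hx

/-- With `x = -δ log α` and `a = α ^ u`, this is `-log α` times the gap between
`∫ s in τ..τ + u + m δ, α ^ (s - τ)` and its right Riemann sum over the `m` full windows. -/
lemma exp_riemann_gap {x a : ℝ} (hx : 0 ≤ x) (hxa : exp (-x) ≤ a) (ha : a ≤ 1) (m : ℕ) :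
    0 ≤ 1 - a * exp (-x) ^ m - x * ∑ j ∈ range m, a * exp (-x) ^ (j + 1) ∧
      1 - a * exp (-x) ^ m - x * ∑ j ∈ range m, a * exp (-x) ^ (j + 1) ≤ 3 / 2 * x := by
  set β := exp (-x)
  have hβ : 0 ≤ β := (exp_pos _).le
  have hlow : x * β ≤ 1 - β := mul_exp_neg_le_one_sub_exp_neg x
  have hup : 2 * (1 - β) ≤ x * (1 + β) := two_mul_one_sub_exp_neg_le hx
  set G := ∑ j ∈ range m, β ^ j
  have hG : 0 ≤ G := sum_nonneg fun j _ => pow_nonneg hβ j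
  have hGβ : G * (1 - β) = 1 - β ^ m := geom_sum_mul_neg β m
  have hsum : ∑ j ∈ range m, a * β ^ (j + 1) = a * β * G := by
    rw [mul_sum]; exact sum_congr rfl fun j _ => by ring
  have hgap : 1 - a * β ^ m - x * (a * β * G) = (1 - a) + a * G * (1 - β - x * β) := by
    linear_combination (-a) * hGβ
  have h2 : G * (1 - β - x * β) ≤ x / 2 :=
    calc G * (1 - β - x * β) ≤ G * (x * (1 - β) / 2) := mul_le_mul_of_nonneg_left (by linarith) hG
      _ = x * (1 - β ^ m) / 2 := by rw [← hGβ]; ring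
      _ ≤ x / 2 := by have := pow_nonneg hβ m; nlinarith
  rw [hsum, hgap]
  constructor
  · have : 0 ≤ a * G * (1 - β - x * β) := by
      apply mul_nonneg (mul_nonneg (hβ.trans hxa) hG); linarith
    linarith
  · nlinarith

lemma integral_rpow_sub {α : ℝ} (hα0 : 0 < α) (hα1 : α ≠ 1) (τ a b : ℝ) :
    ∫ s in a..b, α ^ (s - τ) = (α ^ (b - τ) - α ^ (a - τ)) / log α := by
  have hlog : log α ≠ 0 := log_ne_zero_of_pos_of_ne_one hα0 hα1
  have hderiv : ∀ s, HasDerivAt (fun s => α ^ (s - τ) / log α) (α ^ (s - τ)) s := fun s => by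
    refine ((((hasDerivAt_id s).sub_const τ).const_rpow hα0).div_const (log α)).congr_deriv ?_
    simp only [id, mul_one, mul_div_cancel_left₀ _ hlog]
  have hcont : Continuous fun s => α ^ (s - τ) :=
    continuous_const.rpow (continuous_id.sub continuous_const) fun _ => Or.inl hα0.ne'
  rw [intervalIntegral.integral_eq_sub_of_hasDerivAt (fun s _ => hderiv s)
    (hcont.intervalIntegrable a b), sub_div]

lemma intervalIntegral_indicator_Ioi {E : Type*} [NormedAddCommGroup E] [NormedSpace ℝ E]
    {f : ℝ → E} {a b c : ℝ} (hab : a ≤ b) (hbc : b ≤ c) :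
    ∫ x in a..c, (Set.Ioi b).indicator f x = ∫ x in b..c, f x := by
  rw [intervalIntegral.integral_of_le (hab.trans hbc), intervalIntegral.integral_of_le hbc,
    integral_indicator measurableSet_Ioi, Measure.restrict_restrict measurableSet_Ioi,
    Set.inter_comm, Set.Ioc_inter_Ioi, sup_of_le_right hab]

lemma contRate_eq_indicator (p N : ℕ) (α : ℝ) (W : Matrix (Fin p) (Fin p) ℝ)
    (μbar : Fin p → ℝ) (kn : Fin N → Fin p) (τ : Fin N → ℝ) (k : Fin p) (s : ℝ) :
    contRate p N α W μbar kn τ k s =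
      μbar k + ∑ n, W k (kn n) * (Set.Ioi (τ n)).indicator (fun s => α ^ (s - τ n)) s := by
  simp only [contRate, sum_filter, Set.indicator_apply, Set.mem_Ioi, mul_ite, mul_zero]

lemma integral_contRate {p N : ℕ} {α T : ℝ} (hα : α ∈ Set.Ioo (0 : ℝ) 1)
    (W : Matrix (Fin p) (Fin p) ℝ) (μbar : Fin p → ℝ) (kn : Fin N → Fin p) {τ : Fin N → ℝ}
    (hτ : ∀ n, 0 < τ n ∧ τ n ≤ T) (k : Fin p) :
    ∫ s in (0 : ℝ)..T, contRate p N α W μbar kn τ k s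
      = μbar k * T + ∑ n, W k (kn n) * ((1 - α ^ (T - τ n)) / (-log α)) := by
  have hcont : ∀ n, Continuous fun s => α ^ (s - τ n) := fun n =>
    continuous_const.rpow (continuous_id.sub continuous_const) fun _ => Or.inl hα.1.ne'
  have hint : ∀ n, IntervalIntegrable
      (fun s => W k (kn n) * (Set.Ioi (τ n)).indicator (fun s => α ^ (s - τ n)) s) volume 0 T :=
    fun n => (intervalIntegrable_iff.2 ((intervalIntegrable_iff.1
      ((hcont n).intervalIntegrable 0 T)).indicator measurableSet_Ioi)).const_mul _
  have hsum := IntervalIntegrable.sum univ fun n _ => hint n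
  rw [sum_fn] at hsum
  simp_rw [contRate_eq_indicator]
  rw [intervalIntegral.integral_add intervalIntegrable_const hsum,
    intervalIntegral.integral_const, intervalIntegral.integral_finsetSum fun n _ => hint n]
  congr 1
  · simp [mul_comm]
  refine sum_congr rfl fun n _ => ?_
  rw [intervalIntegral.integral_const_mul,
    intervalIntegral_indicator_Ioi (hτ n).1.le (hτ n).2,
    integral_rpow_sub hα.1 hα.2.ne, sub_self, rpow_zero, div_neg, ← neg_div, neg_sub]

lemma intCeil_mul_lt_iff {δ x : ℝ} (hδ : 0 < δ) (hx : 0 ≤ x) (t : ℕ) :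
    (⌈x / δ⌉ : ℝ) * δ < δ * t ↔ ⌈x / δ⌉₊ < t := by
  rw [← natCast_ceil_eq_intCast_ceil (div_nonneg hx hδ.le), mul_comm δ,
    mul_lt_mul_iff_left₀ hδ, Nat.cast_lt]

lemma mem_window_iff_eq_ceil {δ x : ℝ} (hδ : 0 < δ) (hx : 0 < x) (t : ℕ) :
    ((t : ℝ) - 1) * δ < x ∧ x ≤ t * δ ↔ t = ⌈x / δ⌉₊ := by
  rcases Nat.eq_zero_or_pos t with rfl | ht
  · refine iff_of_false (fun ⟨_, h⟩ => ?_) fun h => (Nat.ceil_pos.2 (div_pos hx hδ)).ne' h.symm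
    rw [Nat.cast_zero, zero_mul] at h
    exact h.not_gt hx
  rw [eq_comm, Nat.ceil_eq_iff ht.ne', Nat.cast_pred ht, lt_div_iff₀ hδ, div_le_iff₀ hδ]

lemma sum_eventCount_mul {p N M : ℕ} {δ : ℝ} (hδ : 0 < δ) (kn : Fin N → Fin p)
    {τ : Fin N → ℝ} (hτ : ∀ n, 0 < τ n ∧ τ n ≤ M * δ) (f : ℕ → Fin p → ℝ) :
    ∑ k, ∑ t ∈ Icc 1 M, (eventCount p N δ kn τ t k : ℝ) * f t k = ∑ n, f ⌈τ n / δ⌉₊ (kn n) := by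
  have hcount : ∀ t k, (eventCount p N δ kn τ t k : ℝ) =
      ∑ n, if kn n = k ∧ t = ⌈τ n / δ⌉₊ then 1 else 0 := fun t k => by
    rw [eventCount, natCast_card_filter]
    exact sum_congr rfl fun n _ => by simp only [mem_window_iff_eq_ceil hδ (hτ n).1]
  have hmem : ∀ n, ⌈τ n / δ⌉₊ ∈ Icc 1 M := fun n => by
    rw [mem_Icc, Nat.one_le_iff_ne_zero, Ne, Nat.ceil_eq_zero, not_le, Nat.ceil_le,
      div_le_iff₀ hδ]
    exact ⟨div_pos (hτ n).1 hδ, (hτ n).2⟩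
  simp_rw [hcount, sum_mul, ite_mul, one_mul, zero_mul]
  rw [sum_comm]
  simp_rw [sum_comm (s := Icc 1 M) (t := univ)]
  rw [sum_comm]
  simp [ite_and, hmem]

lemma sum_discRate {p N : ℕ} {δ : ℝ} (hδ : 0 < δ) (α : ℝ) (W : Matrix (Fin p) (Fin p) ℝ)
    (μbar : Fin p → ℝ) (kn : Fin N → Fin p) {τ : Fin N → ℝ} (hτ : ∀ n, 0 < τ n) (M : ℕ)
    (k : Fin p) :
    ∑ t ∈ Icc 1 M, δ * discRate p N δ α W μbar kn τ t k
      = μbar k * (M * δ) + ∑ n, W k (kn n) * ∑ t ∈ Ioc ⌈τ n / δ⌉₊ M, δ * α ^ (δ * t - τ n) := by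
  have hwindows : ∀ n, (Icc 1 M).filter (fun t : ℕ => ⌈τ n / δ⌉₊ < t) = Ioc ⌈τ n / δ⌉₊ M :=
    fun n => by ext t; simp only [mem_filter, mem_Icc, mem_Ioc]; omega
  simp only [discRate, mul_add, sum_add_distrib, sum_filter, mul_sum,
    intCeil_mul_lt_iff hδ (hτ _).le]
  rw [sum_const, Nat.card_Icc, sum_comm, nsmul_eq_mul, Nat.add_sub_cancel]
  congr 1
  · ring
  refine sum_congr rfl fun n _ => ?_
  rw [← hwindows, sum_filter]
  exact sum_congr rfl fun t _ => by split_ifs <;> ring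

lemma rpow_riemann_gap {α δ τ : ℝ} (hα : α ∈ Set.Ioo (0 : ℝ) 1) (hδ : 0 < δ) (hτ : 0 < τ) {M : ℕ}
    (hτM : τ ≤ M * δ) :
    0 ≤ (1 - α ^ (M * δ - τ)) / (-log α) - ∑ t ∈ Ioc ⌈τ / δ⌉₊ M, δ * α ^ (δ * t - τ) ∧
      (1 - α ^ (M * δ - τ)) / (-log α) - ∑ t ∈ Ioc ⌈τ / δ⌉₊ M, δ * α ^ (δ * t - τ)
        ≤ 3 / 2 * δ := by
  obtain ⟨hα0, hα1⟩ := hα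
  set t₀ := ⌈τ / δ⌉₊
  obtain ⟨m, rfl⟩ : ∃ m, M = t₀ + m :=
    Nat.exists_eq_add_of_le (Nat.ceil_le.2 ((div_le_iff₀ hδ).2 hτM))
  set u := δ * t₀ - τ
  have hu0 : 0 ≤ u := by
    have := (div_le_iff₀ hδ).1 (Nat.le_ceil (τ / δ)); simp only [u]; linarith
  have huδ : u ≤ δ := by
    have := Nat.ceil_lt_add_one (div_nonneg hτ.le hδ.le)
    rw [← sub_lt_iff_lt_add, lt_div_iff₀ hδ] at this
    simp only [u]; linarith
  set c := -log α
  have hc : 0 < c := neg_pos.2 (log_neg hα0 hα1)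
  have hβ : α ^ δ = exp (-(c * δ)) := by
    rw [rpow_def_of_pos hα0]; simp only [c]; ring_nf
  have hpow : ∀ j : ℕ, α ^ (u + δ * j) = α ^ u * exp (-(c * δ)) ^ j := fun j => by
    rw [rpow_add hα0, rpow_mul_natCast hα0.le, hβ]
  have htop : α ^ (↑(t₀ + m) * δ - τ) = α ^ u * exp (-(c * δ)) ^ m := by
    rw [← hpow]; congr 1; push_cast; ring
  have hsum : ∑ t ∈ Ioc t₀ (t₀ + m), δ * α ^ (δ * t - τ)
      = δ * ∑ j ∈ range m, α ^ u * exp (-(c * δ)) ^ (j + 1) := by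
    rw [← Ico_add_one_add_one_eq_Ioc, sum_Ico_eq_sum_range, mul_sum]
    refine sum_congr (by congr 1; omega) fun j _ => ?_
    rw [← hpow]; congr 2; push_cast; ring
  have hβa : exp (-(c * δ)) ≤ α ^ u := by
    rw [← hβ]; exact rpow_le_rpow_of_exponent_ge hα0 hα1.le huδ
  obtain ⟨hlow, hup⟩ := exp_riemann_gap (mul_pos hc hδ).le hβa (rpow_le_one hα0.le hα1.le hu0) m
  have hgap : (1 - α ^ (↑(t₀ + m) * δ - τ)) / c - ∑ t ∈ Ioc t₀ (t₀ + m), δ * α ^ (δ * t - τ)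
      = (1 - α ^ u * exp (-(c * δ)) ^ m
          - c * δ * ∑ j ∈ range m, α ^ u * exp (-(c * δ)) ^ (j + 1)) / c := by
    rw [htop, hsum]; field_simp
  rw [hgap, div_le_iff₀ hc]
  exact ⟨div_nonneg hlow hc.le, by linarith⟩

lemma compensator_gap {p N M : ℕ} {δ α Wmax : ℝ} (hδ : 0 < δ) (hα : α ∈ Set.Ioo (0 : ℝ) 1)
    {W : Matrix (Fin p) (Fin p) ℝ} (hW : ∀ i j, 0 ≤ W i j ∧ W i j ≤ Wmax) (μbar : Fin p → ℝ)
    (kn : Fin N → Fin p) {τ : Fin N → ℝ} (hτ : ∀ n, 0 < τ n ∧ τ n ≤ M * δ) :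
    0 ≤ (∑ k, ∫ s in (0 : ℝ)..M * δ, contRate p N α W μbar kn τ k s)
        - ∑ k, ∑ t ∈ Icc 1 M, δ * discRate p N δ α W μbar kn τ t k ∧
      (∑ k, ∫ s in (0 : ℝ)..M * δ, contRate p N α W μbar kn τ k s)
        - ∑ k, ∑ t ∈ Icc 1 M, δ * discRate p N δ α W μbar kn τ t k
        ≤ 3 * p * Wmax / 2 * N * δ := by
  set G : Fin N → ℝ := fun n => (1 - α ^ (M * δ - τ n)) / (-log α)
    - ∑ t ∈ Ioc ⌈τ n / δ⌉₊ M, δ * α ^ (δ * t - τ n)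
  have hG : ∀ n, 0 ≤ G n ∧ G n ≤ 3 / 2 * δ := fun n => rpow_riemann_gap hα hδ (hτ n).1 (hτ n).2
  have hdiff : ∀ k, (∫ s in (0 : ℝ)..M * δ, contRate p N α W μbar kn τ k s)
      - ∑ t ∈ Icc 1 M, δ * discRate p N δ α W μbar kn τ t k = ∑ n, W k (kn n) * G n := fun k => by
    rw [integral_contRate hα W μbar kn hτ, sum_discRate hδ α W μbar kn (fun n => (hτ n).1),
      add_sub_add_left_eq_sub, ← sum_sub_distrib]
    simp only [G, mul_sub]
  rw [← sum_sub_distrib]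
  simp_rw [hdiff]
  constructor
  · exact sum_nonneg fun k _ => sum_nonneg fun n _ => mul_nonneg (hW _ _).1 (hG n).1
  calc ∑ k, ∑ n, W k (kn n) * G n ≤ ∑ _k : Fin p, ∑ _n : Fin N, Wmax * (3 / 2 * δ) :=
        sum_le_sum fun k _ => sum_le_sum fun n _ =>
          mul_le_mul (hW _ _).2 (hG n).2 (hG n).1 ((hW k (kn n)).1.trans (hW k (kn n)).2)
    _ = 3 * p * Wmax / 2 * N * δ := by
        simp only [sum_const, card_univ, Fintype.card_fin, nsmul_eq_mul]; ring

lemma log_add_sub_log_add_mul_bounds {b SA SB q : ℝ} (hm : 0 < b) (hSB : 0 ≤ SB) (hBA : SB ≤ SA)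
    (hq0 : 0 < q) (hq1 : q ≤ 1) :
    0 ≤ log (b + SA) - log (b + q * SB) ∧
      log (b + SA) - log (b + q * SB) ≤ -log q + (SA - SB) / b := by
  have hqSB : q * SB ≤ SB := mul_le_of_le_one_left hSB hq1
  have hlam : b ≤ b + q * SB := le_add_of_nonneg_right (mul_nonneg hq0.le hSB)
  have hlam0 : 0 < b + q * SB := hm.trans_le hlam
  have hmSA : 0 < b + SA := by linarith
  refine ⟨sub_nonneg.2 (log_le_log hlam0 (by linarith)), ?_⟩
  have hscale : q * (b + SA) ≤ (b + q * SB) + (SA - SB) := by nlinarith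
  have hlog : log (q * (b + SA)) - log (b + q * SB) ≤ (SA - SB) / b := by
    rw [← log_div (by positivity) hlam0.ne']
    calc log (q * (b + SA) / (b + q * SB)) ≤ q * (b + SA) / (b + q * SB) - 1 :=
          log_le_sub_one_of_pos (by positivity)
      _ ≤ (SA - SB) / (b + q * SB) := by
          rw [div_sub_one hlam0.ne']; exact div_le_div_of_nonneg_right (by linarith) hlam0.le
      _ ≤ (SA - SB) / b := div_le_div_of_nonneg_left (by linarith) hm hlam
  rw [log_mul hq0.ne' (by positivity)] at hlog
  linarith

lemma card_window_le {p N : ℕ} {δ xmax : ℝ} {kn : Fin N → Fin p} {τ : Fin N → ℝ}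
    (hrate : ∀ (k : Fin p) (a : ℝ),
      ((Finset.univ.filter (fun n => kn n = k ∧ a < τ n ∧ τ n ≤ a + δ)).card : ℝ) ≤ xmax * δ)
    (a : ℝ) :
    ((Finset.univ.filter (fun n => a < τ n ∧ τ n ≤ a + δ)).card : ℝ) ≤ p * (xmax * δ) := by
  rw [card_eq_sum_card_fiberwise (f := kn) (t := univ) fun _ _ => mem_univ _]
  push_cast
  calc ∑ k, ((filter (fun n => kn n = k) (filter (fun n => a < τ n ∧ τ n ≤ a + δ) univ)).card : ℝ)
      ≤ ∑ _k : Fin p, xmax * δ := sum_le_sum fun k _ => by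
        rw [filter_filter]; simpa only [and_comm] using hrate k a
    _ = p * (xmax * δ) := by simp

lemma discRate_eq_add_mul_sum {p N : ℕ} {δ α : ℝ} (hδ : 0 < δ) (hα0 : 0 < α)
    (W : Matrix (Fin p) (Fin p) ℝ) (μbar : Fin p → ℝ) (kn : Fin N → Fin p) {τ : Fin N → ℝ}
    (hτ : ∀ n, 0 < τ n) (t : ℕ) (k : Fin p) (s : ℝ) :
    discRate p N δ α W μbar kn τ t k = μbar k + α ^ (δ * t - s) *
      ∑ m ∈ univ.filter (fun m => ⌈τ m / δ⌉₊ < t), W k (kn m) * α ^ (s - τ m) := by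
  simp only [discRate, intCeil_mul_lt_iff hδ (hτ _).le, mul_sum]
  refine congrArg _ (sum_congr rfl fun m _ => ?_)
  rw [mul_left_comm, ← rpow_add hα0, sub_add_sub_cancel]

lemma filter_ceil_lt_subset {N : ℕ} {δ : ℝ} (hδ : 0 < δ) {τ : Fin N → ℝ} (hτ : ∀ n, 0 < τ n)
    (n : Fin N) :
    univ.filter (fun m => ⌈τ m / δ⌉₊ < ⌈τ n / δ⌉₊) ⊆ univ.filter (fun m => τ m < τ n) :=
  fun m hm => by
    have hwm := (mem_window_iff_eq_ceil hδ (hτ m) _).2 rfl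
    have hwn := (mem_window_iff_eq_ceil hδ (hτ n) _).2 rfl
    simp only [mem_filter, mem_univ, true_and] at hm ⊢
    have : (⌈τ m / δ⌉₊ : ℝ) + 1 ≤ ⌈τ n / δ⌉₊ := by exact_mod_cast hm
    nlinarith

/-- The events before `τ n` that the discretized rate at `⌈τ n / δ⌉` misses all lie in the
window of `τ n`. -/
lemma card_filter_lt_sdiff_filter_ceil_lt_le {p N : ℕ} {δ xmax : ℝ} (hδ : 0 < δ)
    {kn : Fin N → Fin p} {τ : Fin N → ℝ} (hτ : ∀ n, 0 < τ n)
    (hrate : ∀ (k : Fin p) (a : ℝ),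
      ((Finset.univ.filter (fun n => kn n = k ∧ a < τ n ∧ τ n ≤ a + δ)).card : ℝ) ≤ xmax * δ)
    (n : Fin N) :
    ((univ.filter (fun m => τ m < τ n) \ univ.filter (fun m => ⌈τ m / δ⌉₊ < ⌈τ n / δ⌉₊)).card
      : ℝ) ≤ p * (xmax * δ) := by
  refine le_trans ?_ (card_window_le hrate ((⌈τ n / δ⌉₊ - 1) * δ))
  refine Nat.cast_le.2 (card_le_card fun m hm => ?_)
  have hwm := (mem_window_iff_eq_ceil hδ (hτ m) _).2 rfl
  have hwn := (mem_window_iff_eq_ceil hδ (hτ n) _).2 rfl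
  simp only [mem_sdiff, mem_filter, mem_univ, true_and, not_lt] at hm ⊢
  have : (⌈τ n / δ⌉₊ : ℝ) ≤ ⌈τ m / δ⌉₊ := by exact_mod_cast hm.2
  constructor <;> nlinarith

lemma log_contRate_sub_log_discRate {p N : ℕ} {δ α Wmax μmin xmax : ℝ} (hδ : 0 < δ)
    (hα : α ∈ Set.Ioo (0 : ℝ) 1) {W : Matrix (Fin p) (Fin p) ℝ}
    (hW : ∀ i j, 0 ≤ W i j ∧ W i j ≤ Wmax) {μbar : Fin p → ℝ} (hμmin : 0 < μmin)
    (hμ : ∀ k, μmin ≤ μbar k) {kn : Fin N → Fin p} {τ : Fin N → ℝ} (hτ : ∀ n, 0 < τ n)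
    (hrate : ∀ (k : Fin p) (a : ℝ),
      ((Finset.univ.filter (fun n => kn n = k ∧ a < τ n ∧ τ n ≤ a + δ)).card : ℝ) ≤ xmax * δ)
    (n : Fin N) :
    0 ≤ log (contRate p N α W μbar kn τ (kn n) (τ n))
        - log (discRate p N δ α W μbar kn τ ⌈τ n / δ⌉₊ (kn n)) ∧
      log (contRate p N α W μbar kn τ (kn n) (τ n))
        - log (discRate p N δ α W μbar kn τ ⌈τ n / δ⌉₊ (kn n))
        ≤ (Wmax * xmax * p / μmin - log α) * δ := by
  obtain ⟨hα0, hα1⟩ := hα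
  have hwn := (mem_window_iff_eq_ceil hδ (hτ n) _).2 rfl
  set t := ⌈τ n / δ⌉₊
  set A := univ.filter fun m => τ m < τ n
  set B := univ.filter fun m => ⌈τ m / δ⌉₊ < t
  set F : Fin N → ℝ := fun m => W (kn n) (kn m) * α ^ (τ n - τ m)
  set q := α ^ (δ * t - τ n)
  have hWmax : 0 ≤ Wmax := (hW (kn n) (kn n)).1.trans (hW (kn n) (kn n)).2
  have hF : ∀ m, 0 ≤ F m := fun m => mul_nonneg (hW _ _).1 (rpow_pos_of_pos hα0 _).le
  have hBA : B ⊆ A := filter_ceil_lt_subset hδ hτ n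
  have hAB := card_filter_lt_sdiff_filter_ceil_lt_le hδ hτ hrate n
  have hE : ∑ m ∈ A, F m - ∑ m ∈ B, F m ≤ Wmax * (p * (xmax * δ)) := by
    rw [← sum_sdiff_eq_sub hBA]
    calc ∑ m ∈ A \ B, F m ≤ ∑ _m ∈ A \ B, Wmax := sum_le_sum fun m hm => by
          have hm : τ m < τ n := by simpa [A] using (mem_sdiff.1 hm).1
          calc F m ≤ Wmax * α ^ (τ n - τ m) :=
                mul_le_mul_of_nonneg_right (hW _ _).2 (rpow_pos_of_pos hα0 _).le
            _ ≤ Wmax := mul_le_of_le_one_right hWmax (rpow_le_one hα0.le hα1.le (by linarith))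
      _ ≤ Wmax * (p * (xmax * δ)) := by
          rw [sum_const, nsmul_eq_mul, mul_comm]; exact mul_le_mul_of_nonneg_left hAB hWmax
  have hq : -log q ≤ -log α * δ := by
    rw [log_rpow hα0]; nlinarith [log_neg hα0 hα1]
  have hq1 : q ≤ 1 := rpow_le_one hα0.le hα1.le (by rw [mul_comm]; linarith)
  obtain ⟨hlow, hup⟩ := log_add_sub_log_add_mul_bounds (hμmin.trans_le (hμ (kn n)))
    (sum_nonneg fun m _ => hF m) (sum_le_sum_of_subset_of_nonneg hBA fun m _ _ => hF m)
    (rpow_pos_of_pos hα0 _) hq1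
  have hcont : contRate p N α W μbar kn τ (kn n) (τ n) = μbar (kn n) + ∑ m ∈ A, F m := rfl
  rw [hcont, discRate_eq_add_mul_sum hδ hα0 W μbar kn hτ t (kn n) (τ n)]
  refine ⟨hlow, hup.trans ?_⟩
  have : (∑ m ∈ A, F m - ∑ m ∈ B, F m) / μbar (kn n) ≤ Wmax * (p * (xmax * δ)) / μmin :=
    div_le_div₀ (mul_nonneg hWmax ((Nat.cast_nonneg _).trans hAB)) hE hμmin (hμ (kn n))
  calc _ ≤ -log α * δ + Wmax * (p * (xmax * δ)) / μmin := add_le_add hq this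
    _ = _ := by ring

lemma logLik_gap {p N M : ℕ} {δ α Wmax μmin xmax : ℝ} (hδ : 0 < δ)
    (hα : α ∈ Set.Ioo (0 : ℝ) 1) {W : Matrix (Fin p) (Fin p) ℝ}
    (hW : ∀ i j, 0 ≤ W i j ∧ W i j ≤ Wmax) {μbar : Fin p → ℝ} (hμmin : 0 < μmin)
    (hμ : ∀ k, μmin ≤ μbar k) {kn : Fin N → Fin p} {τ : Fin N → ℝ}
    (hτ : ∀ n, 0 < τ n ∧ τ n ≤ M * δ)
    (hrate : ∀ (k : Fin p) (a : ℝ),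
      ((Finset.univ.filter (fun n => kn n = k ∧ a < τ n ∧ τ n ≤ a + δ)).card : ℝ) ≤ xmax * δ) :
    0 ≤ ∑ n, log (contRate p N α W μbar kn τ (kn n) (τ n)) - ∑ k, ∑ t ∈ Icc 1 M,
        (eventCount p N δ kn τ t k : ℝ) * log (discRate p N δ α W μbar kn τ t k) ∧
      ∑ n, log (contRate p N α W μbar kn τ (kn n) (τ n)) - ∑ k, ∑ t ∈ Icc 1 M,
        (eventCount p N δ kn τ t k : ℝ) * log (discRate p N δ α W μbar kn τ t k)
        ≤ (Wmax * xmax * p / μmin - log α) * N * δ := by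
  have hevent := log_contRate_sub_log_discRate hδ hα hW hμmin hμ (fun n => (hτ n).1) hrate
  rw [sum_eventCount_mul hδ kn hτ fun t k => log (discRate p N δ α W μbar kn τ t k),
    ← sum_sub_distrib]
  refine ⟨sum_nonneg fun n _ => (hevent n).1, ?_⟩
  calc _ ≤ ∑ _n : Fin N, (Wmax * xmax * p / μmin - log α) * δ :=
        sum_le_sum fun n _ => (hevent n).2
    _ = _ := by simp only [sum_const, card_univ, Fintype.card_fin, nsmul_eq_mul]; ring

theorem stmt_14_general (p : ℕ) (T δ α Wmax μmin xmax : ℝ) (M : ℕ)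
    (hδ : 0 < δ) (hT : T = M * δ)
    (hα : α ∈ Set.Ioo (0 : ℝ) 1)
    (W : Matrix (Fin p) (Fin p) ℝ) (hW : ∀ i j, 0 ≤ W i j ∧ W i j ≤ Wmax)
    (μbar : Fin p → ℝ) (hμmin : 0 < μmin) (hμ : ∀ k, μmin ≤ μbar k)
    (N : ℕ) (kn : Fin N → Fin p) (τ : Fin N → ℝ)
    (hτ : ∀ n, 0 < τ n ∧ τ n ≤ T)
    (hrate : ∀ (k : Fin p) (a : ℝ),
      ((Finset.univ.filter (fun n => kn n = k ∧ a < τ n ∧ τ n ≤ a + δ)).card : ℝ)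
        ≤ xmax * δ) :
    |((∑ k, ∫ s in (0:ℝ)..T, contRate p N α W μbar kn τ k s) -
        ∑ n, Real.log (contRate p N α W μbar kn τ (kn n) (τ n))) -
      ∑ k, ∑ t ∈ Finset.Icc 1 M,
        (δ * discRate p N δ α W μbar kn τ t k -
          (eventCount p N δ kn τ t k : ℝ) * Real.log (discRate p N δ α W μbar kn τ t k))|
      ≤ (3 * p * Wmax / 2 + Wmax * xmax * p / μmin - Real.log α) * N * δ := by
  subst hT
  obtain ⟨hcomp₀, hcomp₁⟩ := compensator_gap hδ hα hW μbar kn hτ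
  obtain ⟨hlog₀, hlog₁⟩ := logLik_gap hδ hα hW hμmin hμ hτ hrate
  simp only [sum_sub_distrib]
  rw [abs_le]
  constructor <;> linarith

/-- Lemma 1 of the paper: for exponential influence `h(τ) = α^τ·1_{τ>0}`, the
continuous-time Hawkes negative log likelihood `L_T(μ)` and its discrete-time
approximation `L_T^{(δ)}(λ)` differ by at most `C·N_T·δ` with
`C = 3pWmax/2 + Wmax·xmax·p/μmin − log α`. -/
theorem stmt_14 (p : ℕ) (hp : 1 ≤ p) (T δ α Wmax μmin xmax : ℝ) (M : ℕ)
    (hδ : 0 < δ) (hM : 0 < M) (hT : T = M * δ)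
    (hα : α ∈ Set.Ioo (0 : ℝ) 1)
    (W : Matrix (Fin p) (Fin p) ℝ) (hW : ∀ i j, 0 ≤ W i j ∧ W i j ≤ Wmax)
    (μbar : Fin p → ℝ) (hμmin : 0 < μmin) (hμ : ∀ k, μmin ≤ μbar k)
    (N : ℕ) (kn : Fin N → Fin p) (τ : Fin N → ℝ)
    (hτ : ∀ n, 0 < τ n ∧ τ n ≤ T)
    (hrate : ∀ (k : Fin p) (a : ℝ),
      ((Finset.univ.filter (fun n => kn n = k ∧ a < τ n ∧ τ n ≤ a + δ)).card : ℝ)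
        ≤ xmax * δ) :
    |((∑ k, ∫ s in (0:ℝ)..T, contRate p N α W μbar kn τ k s) -
        ∑ n, Real.log (contRate p N α W μbar kn τ (kn n) (τ n))) -
      ∑ k, ∑ t ∈ Finset.Icc 1 M,
        (δ * discRate p N δ α W μbar kn τ t k -
          (eventCount p N δ kn τ t k : ℝ) * Real.log (discRate p N δ α W μbar kn τ t k))|
      ≤ (3 * p * Wmax / 2 + Wmax * xmax * p / μmin - Real.log α) * N * δ :=
  stmt_14_general p T δ α Wmax μmin xmax M hδ hT hα W hW μbar hμmin hμ N kn τ hτ hrate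
end

section
/- Fix p ≥ 1, a horizon T > 0, a window size δ > 0 with T/δ a positive integer, α ∈ (0, 1), a matrix W ∈ ℝ₊^{p×p} with all entries satisfying 0 ≤ W_{i,j} ≤ Wmax, and a baseline μ̄ with μ̄_k ≥ μmin > 0 for all k. Let (k_n, τ_n), n = 1, …, N_T, be events with k_n ∈ {1, …, p} and 0 < τ_n ≤ T, and suppose each actor has at most xmax·δ events in any interval of length δ. Then −N_T·(Wmax·xmax·p/μmin − log α)·δ ≤ Σ_{n=1}^{N_T} log( λ_{τ̄_n/δ, k_n} / μ_{k_n}(τ_n) ) ≤ 0. -/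
open scoped Classical

lemma le_ceil_div_mul {δ : ℝ} (hδ : 0 < δ) (x : ℝ) : x ≤ ⌈x / δ⌉ * δ :=
  (div_le_iff₀ hδ).1 (Int.le_ceil _)

lemma ceil_div_mul_lt {δ : ℝ} (hδ : 0 < δ) (x : ℝ) : ⌈x / δ⌉ * δ < x + δ := by
  have h := (lt_div_iff₀ hδ).1 (sub_lt_iff_lt_add.2 (Int.ceil_lt_add_one (x / δ)))
  linarith

lemma lt_of_ceil_div_mul_lt {δ x y : ℝ} (hδ : 0 < δ) (h : ⌈y / δ⌉ * δ < ⌈x / δ⌉ * δ) : y < x := by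
  by_contra! hxy
  have hceil : (⌈x / δ⌉ : ℝ) ≤ ⌈y / δ⌉ := by
    exact_mod_cast Int.ceil_le_ceil (div_le_div_of_nonneg_right hxy hδ.le)
  exact (mul_le_mul_of_nonneg_right hceil hδ.le).not_gt h

lemma mul_sub_mem_Icc_of_eq_ceil {δ s t : ℝ} (hδ : 0 < δ) (ht : t = ⌈s / δ⌉) :
    δ * t - s ∈ Set.Icc 0 δ := by
  have := ceil_div_mul_lt hδ s
  have := le_ceil_div_mul hδ s
  rw [Set.mem_Icc, ht]
  constructor <;> linarith

lemma cast_toNat_ceil {x : ℝ} (hx : 0 ≤ x) : ((⌈x⌉.toNat : ℕ) : ℝ) = ⌈x⌉ := by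
  rw [← Int.cast_natCast, Int.toNat_of_nonneg (Int.ceil_nonneg hx)]

lemma Finset.cast_card_le_card_mul_of_card_fiber_le {ι κ : Type*} [Fintype κ] (s : Finset ι)
    (f : ι → κ) {c : ℝ} (h : ∀ k, ((s.filter (f · = k)).card : ℝ) ≤ c) :
    (s.card : ℝ) ≤ Fintype.card κ * c := by
  rw [Finset.card_eq_sum_card_fiberwise (fun m _ => Finset.mem_coe.2 (Finset.mem_univ (f m)))]
  push_cast
  calc ∑ k, ((s.filter (f · = k)).card : ℝ) ≤ ∑ _k : κ, c := Finset.sum_le_sum fun k _ => h k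
    _ = Fintype.card κ * c := by simp

lemma Real.log_add_mul_div_add_add_nonpos {a S R c : ℝ} (ha : 0 < a) (hS : 0 ≤ S) (hR : 0 ≤ R)
    (hc0 : 0 ≤ c) (hc1 : c ≤ 1) : Real.log ((a + c * S) / (a + S + R)) ≤ 0 := by
  refine Real.log_nonpos (by positivity) ((div_le_one (by positivity)).2 ?_)
  nlinarith

lemma Real.log_sub_div_le_log_add_mul_div_add_add {a S R c μmin : ℝ} (hμmin : 0 < μmin)
    (ha : μmin ≤ a) (hS : 0 ≤ S) (hR : 0 ≤ R) (hc0 : 0 < c) (hc1 : c ≤ 1) :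
    Real.log c - R / μmin ≤ Real.log ((a + c * S) / (a + S + R)) := by
  have haS : 0 < a + S := by linarith
  have hratio : Real.log ((a + S + R) / (a + S)) ≤ R / (a + S) :=
    calc Real.log ((a + S + R) / (a + S)) ≤ (a + S + R) / (a + S) - 1 :=
          Real.log_le_sub_one_of_pos (by positivity)
      _ = R / (a + S) := by field_simp; ring
  calc Real.log c - R / μmin ≤ Real.log c - R / (a + S) := by gcongr; linarith
    _ ≤ Real.log c - Real.log ((a + S + R) / (a + S)) := by linarith
    _ = Real.log (c * (a + S) / (a + S + R)) := by
      rw [Real.log_div (by positivity : c * (a + S) ≠ 0) (by positivity : a + S + R ≠ 0),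
        Real.log_mul hc0.ne' haS.ne', Real.log_div (by positivity) haS.ne']
      ring
    _ ≤ Real.log ((a + c * S) / (a + S + R)) := by
      gcongr
      nlinarith

section Hawkes

variable {p N : ℕ} {δ α : ℝ} {W : Matrix (Fin p) (Fin p) ℝ} {μbar : Fin p → ℝ}
  {kn : Fin N → Fin p} {τ : Fin N → ℝ}

lemma discRate_eq_add_rpow_mul_sum (hα : 0 < α) (t : ℕ) (k : Fin p) (s : ℝ) :
    discRate p N δ α W μbar kn τ t k = μbar k + α ^ (δ * t - s) *
      ∑ m ∈ Finset.univ.filter (fun m => (⌈τ m / δ⌉ : ℝ) * δ < δ * t),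
        W k (kn m) * α ^ (s - τ m) := by
  rw [discRate, Finset.mul_sum]
  congr 1
  refine Finset.sum_congr rfl fun m _ => ?_
  rw [mul_left_comm, ← Real.rpow_add hα, sub_add_sub_cancel]

lemma filter_ceil_div_mul_lt_subset (hδ : 0 < δ) {s : ℝ} {t : ℕ} (ht : (t : ℝ) = ⌈s / δ⌉) :
    Finset.univ.filter (fun m => (⌈τ m / δ⌉ : ℝ) * δ < δ * t) ⊆
      Finset.univ.filter (fun m => τ m < s) := fun m hm => by
  simp only [Finset.mem_filter, Finset.mem_univ, true_and, ht] at hm ⊢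
  exact lt_of_ceil_div_mul_lt hδ (by linarith)

lemma filter_lt_sdiff_subset_filter_mem_Ioc (hδ : 0 < δ) {s : ℝ} {t : ℕ}
    (ht : (t : ℝ) = ⌈s / δ⌉) :
    Finset.univ.filter (fun m => τ m < s) \
        Finset.univ.filter (fun m => (⌈τ m / δ⌉ : ℝ) * δ < δ * t) ⊆
      Finset.univ.filter (fun m => τ m ∈ Set.Ioc (δ * t - δ) (δ * t)) := fun m hm => by
  simp only [Finset.mem_sdiff, Finset.mem_filter, Finset.mem_univ, true_and, not_lt,
    Set.mem_Ioc, ht] at hm ⊢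
  have := ceil_div_mul_lt hδ (τ m)
  have := le_ceil_div_mul hδ s
  constructor <;> linarith

lemma card_filter_mem_Ioc_le {xmax : ℝ}
    (hrate : ∀ (k : Fin p) (a : ℝ),
      ((Finset.univ.filter (fun n => kn n = k ∧ a < τ n ∧ τ n ≤ a + δ)).card : ℝ) ≤ xmax * δ)
    (a : ℝ) :
    ((Finset.univ.filter (fun m => τ m ∈ Set.Ioc (a - δ) a)).card : ℝ) ≤ p * (xmax * δ) := by
  simpa using Finset.cast_card_le_card_mul_of_card_fiber_le _ kn fun k => by
    refine le_trans ?_ (hrate k (a - δ))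
    rw [Finset.filter_filter, sub_add_cancel]
    exact_mod_cast Finset.card_le_card fun m hm => by simp_all

theorem log_discRate_div_contRate_mem_Icc (hδ : 0 < δ) (hα : α ∈ Set.Ioo 0 1)
    {Wmax μmin xmax : ℝ} (hW : ∀ i j, 0 ≤ W i j ∧ W i j ≤ Wmax) (hμmin : 0 < μmin)
    (hμ : ∀ k, μmin ≤ μbar k)
    (hrate : ∀ (k : Fin p) (a : ℝ),
      ((Finset.univ.filter (fun n => kn n = k ∧ a < τ n ∧ τ n ≤ a + δ)).card : ℝ) ≤ xmax * δ)
    (k : Fin p) {s : ℝ} (hs : 0 < s) :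
    Real.log (discRate p N δ α W μbar kn τ ⌈s / δ⌉.toNat k / contRate p N α W μbar kn τ k s) ∈
      Set.Icc (-((Wmax * xmax * p / μmin - Real.log α) * δ)) 0 := by
  obtain ⟨hα0, hα1⟩ := hα
  set t := ⌈s / δ⌉.toNat
  have ht : (t : ℝ) = ⌈s / δ⌉ := cast_toNat_ceil (div_pos hs hδ).le
  set A := Finset.univ.filter (fun m => (⌈τ m / δ⌉ : ℝ) * δ < δ * t)
  set B := Finset.univ.filter (fun m => τ m < s)
  set f := fun m => W k (kn m) * α ^ (s - τ m)
  have hf : ∀ m ∈ B, 0 ≤ f m ∧ f m ≤ Wmax := fun m hm => by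
    have hsm : 0 ≤ s - τ m := by simp only [B, Finset.mem_filter] at hm; linarith
    have hαsm : α ^ (s - τ m) ≤ 1 := Real.rpow_le_one hα0.le hα1.le hsm
    exact ⟨mul_nonneg (hW _ _).1 (by positivity),
      (mul_le_of_le_one_right (hW _ _).1 hαsm).trans (hW _ _).2⟩
  have hAB : A ⊆ B := filter_ceil_div_mul_lt_subset hδ ht
  have hR : (∑ m ∈ B \ A, f m) / μmin ≤ Wmax * xmax * p / μmin * δ := by
    have hWmax : 0 ≤ Wmax := (hW k k).1.trans (hW k k).2
    have hsum : ∑ m ∈ B \ A, f m ≤ (B \ A).card * Wmax := by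
      simpa using Finset.sum_le_card_nsmul _ _ _ fun m hm => (hf m (Finset.sdiff_subset hm)).2
    have hcard : ((B \ A).card : ℝ) ≤ p * (xmax * δ) := by
      have hwindow := Finset.card_le_card (filter_lt_sdiff_subset_filter_mem_Ioc (τ := τ) hδ ht)
      exact (Nat.cast_le.2 hwindow).trans (card_filter_mem_Ioc_le hrate _)
    rw [div_mul_eq_mul_div]
    gcongr
    nlinarith
  have hcont : contRate p N α W μbar kn τ k s = μbar k + ∑ m ∈ A, f m + ∑ m ∈ B \ A, f m := by
    rw [contRate, ← Finset.sum_sdiff hAB]; ring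
  have hS : 0 ≤ ∑ m ∈ A, f m := Finset.sum_nonneg fun m hm => (hf m (hAB hm)).1
  have hR0 : 0 ≤ ∑ m ∈ B \ A, f m :=
    Finset.sum_nonneg fun m hm => (hf m (Finset.sdiff_subset hm)).1
  have hε : δ * t - s ∈ Set.Icc 0 δ := mul_sub_mem_Icc_of_eq_ceil hδ ht
  have hαε : Real.log α * δ ≤ Real.log (α ^ (δ * t - s)) := by
    rw [Real.log_rpow hα0, mul_comm]
    exact mul_le_mul_of_nonpos_right hε.2 (Real.log_nonpos hα0.le hα1.le)
  rw [discRate_eq_add_rpow_mul_sum hα0 t k s, hcont]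
  constructor
  · have := Real.log_sub_div_le_log_add_mul_div_add_add hμmin (hμ k) hS hR0
      (Real.rpow_pos_of_pos hα0 (δ * t - s)) (Real.rpow_le_one hα0.le hα1.le hε.1)
    linarith
  · exact Real.log_add_mul_div_add_add_nonpos (hμmin.trans_le (hμ k)) hS hR0
      (by positivity) (Real.rpow_le_one hα0.le hα1.le hε.1)

end Hawkes

theorem stmt_16_general (p : ℕ) (T δ α Wmax μmin xmax : ℝ)
    (hδ : 0 < δ)
    (hα : α ∈ Set.Ioo (0 : ℝ) 1)
    (W : Matrix (Fin p) (Fin p) ℝ) (hW : ∀ i j, 0 ≤ W i j ∧ W i j ≤ Wmax)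
    (μbar : Fin p → ℝ) (hμmin : 0 < μmin) (hμ : ∀ k, μmin ≤ μbar k)
    (N : ℕ) (kn : Fin N → Fin p) (τ : Fin N → ℝ)
    (hτ : ∀ n, 0 < τ n ∧ τ n ≤ T)
    (hrate : ∀ (k : Fin p) (a : ℝ),
      ((Finset.univ.filter (fun n => kn n = k ∧ a < τ n ∧ τ n ≤ a + δ)).card : ℝ)
        ≤ xmax * δ) :
    -(N * (Wmax * xmax * p / μmin - Real.log α) * δ) ≤
      (∑ n, Real.log (discRate p N δ α W μbar kn τ (⌈τ n / δ⌉.toNat) (kn n) /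
        contRate p N α W μbar kn τ (kn n) (τ n))) ∧
    (∑ n, Real.log (discRate p N δ α W μbar kn τ (⌈τ n / δ⌉.toNat) (kn n) /
        contRate p N α W μbar kn τ (kn n) (τ n))) ≤ 0 := by
  have hterm n :=
    log_discRate_div_contRate_mem_Icc hδ hα hW hμmin hμ hrate (kn n) (hτ n).1
  constructor
  · calc -(N * (Wmax * xmax * p / μmin - Real.log α) * δ)
        = ∑ _n : Fin N, -((Wmax * xmax * p / μmin - Real.log α) * δ) := by simp; ring
      _ ≤ _ := Finset.sum_le_sum fun n _ => (hterm n).1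
  · exact Finset.sum_nonpos fun n _ => (hterm n).2

/-- Log-term bound in the proof of Lemma 1:
`−N_T·(Wmax·xmax·p/μmin − log α)·δ ≤ Σ_n log(λ_{τ̄_n/δ, k_n}/μ_{k_n}(τ_n)) ≤ 0`. -/
theorem stmt_16 (p : ℕ) (hp : 1 ≤ p) (T δ α Wmax μmin xmax : ℝ) (M : ℕ)
    (hδ : 0 < δ) (hM : 0 < M) (hT : T = M * δ)
    (hα : α ∈ Set.Ioo (0 : ℝ) 1)
    (W : Matrix (Fin p) (Fin p) ℝ) (hW : ∀ i j, 0 ≤ W i j ∧ W i j ≤ Wmax)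
    (μbar : Fin p → ℝ) (hμmin : 0 < μmin) (hμ : ∀ k, μmin ≤ μbar k)
    (N : ℕ) (kn : Fin N → Fin p) (τ : Fin N → ℝ)
    (hτ : ∀ n, 0 < τ n ∧ τ n ≤ T)
    (hrate : ∀ (k : Fin p) (a : ℝ),
      ((Finset.univ.filter (fun n => kn n = k ∧ a < τ n ∧ τ n ≤ a + δ)).card : ℝ)
        ≤ xmax * δ) :
    -(N * (Wmax * xmax * p / μmin - Real.log α) * δ) ≤
      (∑ n, Real.log (discRate p N δ α W μbar kn τ (⌈τ n / δ⌉.toNat) (kn n) /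
        contRate p N α W μbar kn τ (kn n) (τ n))) ∧
    (∑ n, Real.log (discRate p N δ α W μbar kn τ (⌈τ n / δ⌉.toNat) (kn n) /
        contRate p N α W μbar kn τ (kn n) (τ n))) ≤ 0 :=
  stmt_16_general p T δ α Wmax μmin xmax hδ hα W hW μbar hμmin hμ N kn τ hτ hrate
end

section
/- For every α ∈ (0, 1), every δ > 0, every u ≥ 0, and every s ∈ [0, δ], the quantity E = α^u·( δ·α^δ/(1 − α^δ) + 1/log α ) − 1/log α − α^s·δ·α^δ/(1 − α^δ) satisfies −δ/2 ≤ E ≤ 3δ/2. -/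
/-!
Write `x = -δ log α > 0`, so that `α^δ = e^{-x}`. With `C = δα^δ/(1 - α^δ) = δ/(e^x - 1)` and
`D = -1/log α - C = δ (1/x - 1/(e^x - 1))` the error is `E = D (1 - α^u) + C (1 - α^s)`.
Both terms are nonnegative; the first is at most `δ/2` because `1/x - 1/(e^x - 1) ≤ 1/2`
(equivalently `e^x (2 - x) ≤ 2 + x`, the Padé bound for `exp`), and the second is at most
`C (1 - α^δ) = δ α^δ ≤ δ`.
-/

open Real Set

lemma Real.exp_mul_two_sub_le {x : ℝ} (hx : 0 ≤ x) : exp x * (2 - x) ≤ 2 + x := by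
  rcases lt_or_ge x 2 with h | h
  · exact (le_div_iff₀ (by linarith)).mp (exp_le_two_add_div_two_sub hx h)
  · nlinarith [exp_pos x]

lemma one_div_exp_sub_one_le_one_div {x : ℝ} (hx : 0 < x) : 1 / (exp x - 1) ≤ 1 / x :=
  one_div_le_one_div_of_le hx (by linarith [add_one_le_exp x])

lemma one_div_le_one_div_exp_sub_one_add_half {x : ℝ} (hx : 0 < x) :
    1 / x ≤ 1 / (exp x - 1) + 1 / 2 := by
  have hex : 0 < exp x - 1 := by linarith [add_one_lt_exp hx.ne']
  rw [div_add_div _ _ hex.ne' two_ne_zero, div_le_div_iff₀ hx (by positivity)]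
  nlinarith [exp_mul_two_sub_le hx.le]

lemma neg_one_div_log_sub_rpow_div_mem_Icc {α δ : ℝ} (hα₀ : 0 < α) (hα₁ : α < 1) (hδ : 0 < δ) :
    -(1 / log α) - δ * α ^ δ / (1 - α ^ δ) ∈ Icc 0 (δ / 2) := by
  have hlog : log α < 0 := log_neg hα₀ hα₁
  set x := -(δ * log α) with hx_def
  have hx : 0 < x := by nlinarith
  have hex : 0 < exp x - 1 := by linarith [add_one_lt_exp hx.ne']
  have hrpow : α ^ δ = exp (-x) := by rw [rpow_def_of_pos hα₀, hx_def, neg_neg, mul_comm]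
  have hE : -(1 / log α) - δ * α ^ δ / (1 - α ^ δ) = δ * (1 / x - 1 / (exp x - 1)) := by
    rw [hrpow, exp_neg]
    field_simp [hlog.ne, hx.ne', hex.ne']
    ring
  rw [hE]
  constructor
  · exact mul_nonneg hδ.le (sub_nonneg.mpr (one_div_exp_sub_one_le_one_div hx))
  · nlinarith [one_div_le_one_div_exp_sub_one_add_half hx]

lemma rpow_div_one_sub_rpow_mul_one_sub_rpow_le {α δ s : ℝ} (hα₀ : 0 < α) (hα₁ : α < 1)
    (hδ : 0 < δ) (hs : s ∈ Icc 0 δ) :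
    δ * α ^ δ / (1 - α ^ δ) * (1 - α ^ s) ≤ δ := by
  have hβ : α ^ δ < 1 := rpow_lt_one hα₀.le hα₁ hδ
  calc δ * α ^ δ / (1 - α ^ δ) * (1 - α ^ s)
      ≤ δ * α ^ δ / (1 - α ^ δ) * (1 - α ^ δ) :=
        mul_le_mul_of_nonneg_left (by linarith [rpow_le_rpow_of_exponent_ge hα₀ hα₁.le hs.2])
          (div_nonneg (by positivity) (by linarith))
    _ = δ * α ^ δ := div_mul_cancel₀ _ (by linarith)
    _ ≤ δ := mul_le_of_le_one_right hδ.le hβ.le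

/-- Per-event discretization error bound in the proof of Lemma 1: for `α ∈ (0,1)`,
`δ > 0`, `u ≥ 0`, `s ∈ [0, δ]`,
`−δ/2 ≤ α^u·(δα^δ/(1−α^δ) + 1/log α) − 1/log α − α^s·δα^δ/(1−α^δ) ≤ 3δ/2`. -/
theorem stmt_17 (α δ u s : ℝ) (hα : α ∈ Set.Ioo (0 : ℝ) 1) (hδ : 0 < δ)
    (hu : 0 ≤ u) (hs : s ∈ Set.Icc 0 δ) :
    -δ / 2 ≤ α ^ u * (δ * α ^ δ / (1 - α ^ δ) + 1 / Real.log α) - 1 / Real.log α -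
        α ^ s * (δ * α ^ δ / (1 - α ^ δ)) ∧
      α ^ u * (δ * α ^ δ / (1 - α ^ δ) + 1 / Real.log α) - 1 / Real.log α -
        α ^ s * (δ * α ^ δ / (1 - α ^ δ)) ≤ 3 * δ / 2 := by
  obtain ⟨hα₀, hα₁⟩ := hα
  set C := δ * α ^ δ / (1 - α ^ δ)
  set D := -(1 / log α) - C
  obtain ⟨hD₀, hD⟩ : D ∈ Icc 0 (δ / 2) := neg_one_div_log_sub_rpow_div_mem_Icc hα₀ hα₁ hδ
  have hC₀ : 0 ≤ C := div_nonneg (by positivity) (by linarith [rpow_lt_one hα₀.le hα₁ hδ])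
  have hCs : C * (1 - α ^ s) ≤ δ := rpow_div_one_sub_rpow_mul_one_sub_rpow_le hα₀ hα₁ hδ hs
  have hαu : α ^ u ≤ 1 := rpow_le_one hα₀.le hα₁.le hu
  have hαs : α ^ s ≤ 1 := rpow_le_one hα₀.le hα₁.le hs.1
  have hE : α ^ u * (C + 1 / log α) - 1 / log α - α ^ s * C
      = D * (1 - α ^ u) + C * (1 - α ^ s) := by ring
  rw [hE]
  constructor <;> nlinarith [rpow_pos_of_pos hα₀ u]
end
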